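/- (Hyperbolic law of cosines for a triangle with one hyperideal vertex, in the hyperboloid model.) Equip ℝ³ with the Lorentz form ⟨x,y⟩ = x₁y₁ + x₂y₂ − x₃y₃. Let A, B ∈ ℝ³ satisfy ⟨A,A⟩ = ⟨B,B⟩ = −1, A₃ > 0, B₃ > 0 and ⟨A,B⟩ < −1 (A, B are distinct points of the hyperbolic plane), and let C ∈ ℝ³ satisfy ⟨C,C⟩ = 1, ⟨A,C⟩ > 0, ⟨B,C⟩ > 0 (C is the pole of a geodesic not through A or B, representing a hyperideal vertex). Define a, b, c > 0 by sinh a = ⟨B,C⟩, sinh b = ⟨A,C⟩, cosh c = −⟨A,B⟩. Let u* = (B + ⟨A,B⟩A)/sinh c be the unit tangent vector at A pointing toward B, and let w* = −(C + ⟨A,C⟩A)/cosh b be the unit tangent vector at A pointing toward the geodesic polar to C. Then ⟨u*, w*⟩ = (sinh b · cosh c − sinh a) / (cosh b · sinh c); that is, the angle α at the visible vertex A satisfies cos α = (sinh b cosh c − sinh a)/(cosh b sinh c). -/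

import Mathlib

/-- The Lorentz form on ℝ³ (hyperboloid model of the hyperbolic plane). -/
def lor3 (x y : Fin 3 → ℝ) : ℝ :=
  x 0 * y 0 + x 1 * y 1 - x 2 * y 2

theorem stmt_9 (A B C : Fin 3 → ℝ)
    (hA : lor3 A A = -1) (hB : lor3 B B = -1)
    (hA3 : 0 < A 2) (hB3 : 0 < B 2)
    (hAB : lor3 A B < -1)
    (hC : lor3 C C = 1)
    (hAC : 0 < lor3 A C) (hBC : 0 < lor3 B C)
    (a b c : ℝ) (ha : 0 < a) (hb : 0 < b) (hc : 0 < c)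
    (hsa : Real.sinh a = lor3 B C)
    (hsb : Real.sinh b = lor3 A C)
    (hcc : Real.cosh c = -(lor3 A B)) :
    lor3 ((Real.sinh c)⁻¹ • (B + lor3 A B • A))
         (-((Real.cosh b)⁻¹ • (C + lor3 A C • A)))
      = (Real.sinh b * Real.cosh c - Real.sinh a) /
        (Real.cosh b * Real.sinh c) := by
  have hsc : Real.sinh c ≠ 0 := by positivity
  have hcb : Real.cosh b ≠ 0 := ne_of_gt (Real.cosh_pos b)
  simp only [lor3, Pi.smul_apply, Pi.add_apply, Pi.neg_apply, smul_eq_mul] at *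
  field_simp
  linear_combination hsa
    - (Real.cosh c) * hsb
    - ((A 0 * C 0 + A 1 * C 1 - A 2 * C 2)) * hcc
    - ((A 0 * B 0 + A 1 * B 1 - A 2 * B 2) *
        (A 0 * C 0 + A 1 * C 1 - A 2 * C 2)) * hA
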